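/- For every dyadic interval I in the real line, the L^2-normalized Haar function h_I can be written as h_I = α_I h_I^v + β_I 𝟙_I/√|I|, where h_I^v is the weighted Haar function associated to the weight v, and the coefficients satisfy |α_I| ≤ √(m_I v) and |β_I| ≤ |Δ_I v| / m_I v, where Δ_I v = m_{I_+} v − m_{I_−} v. -/

import Mathlib

open MeasureTheory Set

noncomputable section

/-- A dyadic interval, indexed by scale `n` and position `k`,
representing `[k·2⁻ⁿ, (k+1)·2⁻ⁿ)`. -/
abbrev DI : Type := ℤ × ℤ

/-- The underlying set of a dyadic interval. -/
def dSet (I : DI) : Set ℝ :=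
  Set.Ico ((I.2 : ℝ) * (2:ℝ) ^ (-I.1)) (((I.2 : ℝ) + 1) * (2:ℝ) ^ (-I.1))

/-- The length `|I|` of a dyadic interval. -/
def dLen (I : DI) : ℝ := (2:ℝ) ^ (-I.1)

/-- The left child `I₋`. -/
def dLeft (I : DI) : DI := (I.1 + 1, 2 * I.2)

/-- The right child `I₊`. -/
def dRight (I : DI) : DI := (I.1 + 1, 2 * I.2 + 1)

/-- The dyadic parent `Î`. -/
def dParent (I : DI) : DI := (I.1 - 1, I.2 / 2)

/-- `I` is a dyadic subinterval of `J`. -/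
def dSub (I J : DI) : Prop := J.1 ≤ I.1 ∧ dSet I ⊆ dSet J

/-- The average `m_I f` of `f` over `I` (w.r.t. Lebesgue measure). -/
def avg (I : DI) (f : ℝ → ℝ) : ℝ := (dLen I)⁻¹ * ∫ x in dSet I, f x

/-- `v(I) = ∫_I v`. -/
def wMass (v : ℝ → ℝ) (I : DI) : ℝ := ∫ x in dSet I, v x

/-- The L²-normalized Haar function `h_I`. -/
def haar (I : DI) : ℝ → ℝ := fun x =>
  (Real.sqrt (dLen I))⁻¹ *
    ((dSet (dRight I)).indicator (fun _ => (1:ℝ)) x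
      - (dSet (dLeft I)).indicator (fun _ => (1:ℝ)) x)

/-- The Haar coefficient `⟨b, h_I⟩`. -/
def hInner (b : ℝ → ℝ) (I : DI) : ℝ := ∫ x, b x * haar I x

/-- `Δ_I v = m_{I₊} v − m_{I₋} v`. -/
def deltaAvg (v : ℝ → ℝ) (I : DI) : ℝ := avg (dRight I) v - avg (dLeft I) v

/-- A weight: a locally integrable, a.e. positive function on `ℝ`. -/
def IsWeight (v : ℝ → ℝ) : Prop :=
  MeasureTheory.LocallyIntegrable v MeasureTheory.volume ∧
    ∀ᵐ x ∂(MeasureTheory.volume : MeasureTheory.Measure ℝ), 0 < v x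

/-- The reciprocal `u⁻¹` of a function. -/
def inv' (u : ℝ → ℝ) : ℝ → ℝ := fun x => (u x)⁻¹

/-- `{lam I}` is a `v`-Carleson sequence with intensity `C`
(finite-sum formulation, equivalent for nonnegative sequences). -/
def IsCarleson (v : ℝ → ℝ) (lam : DI → ℝ) (C : ℝ) : Prop :=
  ∀ J : DI, ∀ F : Finset DI, (∀ I ∈ F, dSub I J) → ∑ I ∈ F, lam I ≤ C * wMass v J

/-- The `L²(v)` norm. -/
def L2norm (v f : ℝ → ℝ) : ℝ := Real.sqrt (∫ x, (f x)^2 * v x)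

/-- The pair `(u,v)` satisfies the joint dyadic `𝒜₂` condition with constant `Q`. -/
def JointA2 (u v : ℝ → ℝ) (Q : ℝ) : Prop :=
  ∀ I : DI, avg I (inv' u) * avg I v ≤ Q

/-- `v` is in the dyadic `RH₁` class with constant `R`. -/
def RH1 (v : ℝ → ℝ) (R : ℝ) : Prop :=
  ∀ I : DI, avg I (fun x => (v x / avg I v) * Real.log (v x / avg I v)) ≤ R

/-- The weighted Haar function `h_I^v`. -/
def whaar (v : ℝ → ℝ) (I : DI) : ℝ → ℝ := fun x =>
  (Real.sqrt (wMass v I))⁻¹ *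
    (Real.sqrt (wMass v (dLeft I) / wMass v (dRight I)) *
        (dSet (dRight I)).indicator (fun _ => (1:ℝ)) x
      - Real.sqrt (wMass v (dRight I) / wMass v (dLeft I)) *
        (dSet (dLeft I)).indicator (fun _ => (1:ℝ)) x)

/-!
Everything in sight is constant on the two children of `I`, so with `a = v(I₋)`, `b = v(I₊)` the
decomposition amounts to matching two coefficients; this forces `α_I = 2√(ab) / √(v(I)|I|)` and
`β_I = (b - a) / (a + b)`. The bound on `α_I` is then AM–GM, `2√(ab) ≤ a + b`, and the bound on
`β_I` holds with a factor 2 to spare, since `Δ_I v / m_I v = 2 β_I`.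
-/

lemma dLen_pos (I : DI) : 0 < dLen I := zpow_pos two_pos _

lemma dLen_dLeft (I : DI) : dLen (dLeft I) = dLen I / 2 := by
  simp only [dLen, dLeft, neg_add, zpow_add₀ (two_ne_zero : (2:ℝ) ≠ 0), zpow_neg_one,
    div_eq_mul_inv]

lemma dLen_dRight (I : DI) : dLen (dRight I) = dLen I / 2 := dLen_dLeft I

lemma dSet_eq_Ico (I : DI) : dSet I = Ico (I.2 * dLen I) ((I.2 + 1) * dLen I) := rfl

lemma volume_dSet (I : DI) : volume (dSet I) = ENNReal.ofReal (dLen I) := by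
  rw [dSet_eq_Ico, Real.volume_Ico]
  ring_nf

lemma dSet_dLeft (I : DI) :
    dSet (dLeft I) = Ico (I.2 * dLen I) ((I.2 + 2⁻¹) * dLen I) := by
  rw [dSet_eq_Ico, dLen_dLeft]
  push_cast [dLeft]
  ring_nf

lemma dSet_dRight (I : DI) :
    dSet (dRight I) = Ico ((I.2 + 2⁻¹) * dLen I) ((I.2 + 1) * dLen I) := by
  rw [dSet_eq_Ico, dLen_dRight]
  push_cast [dRight]
  ring_nf

lemma dSet_eq_union (I : DI) : dSet I = dSet (dLeft I) ∪ dSet (dRight I) := by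
  have hL := dLen_pos I
  rw [dSet_dLeft, dSet_dRight, Ico_union_Ico_eq_Ico (by gcongr; norm_num) (by gcongr; norm_num),
    dSet_eq_Ico]

lemma disjoint_dSet_dLeft_dRight (I : DI) : Disjoint (dSet (dLeft I)) (dSet (dRight I)) := by
  rw [dSet_dLeft, dSet_dRight]
  exact Ico_disjoint_Ico_same

lemma indicator_dSet_eq_add (I : DI) (x : ℝ) :
    (dSet I).indicator (fun _ => (1:ℝ)) x =
      (dSet (dLeft I)).indicator (fun _ => 1) x + (dSet (dRight I)).indicator (fun _ => 1) x := by
  rw [dSet_eq_union, indicator_union_of_disjoint (disjoint_dSet_dLeft_dRight I)]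

lemma setIntegral_pos_of_ae_pos {α : Type*} [MeasurableSpace α] {μ : Measure α} {f : α → ℝ}
    {s : Set α} (hf : ∀ᵐ x ∂μ, 0 < f x) (hfi : IntegrableOn f s μ) (hs : μ s ≠ 0) :
    0 < ∫ x in s, f x ∂μ := by
  have hsupp : Function.support f =ᵐ[μ.restrict s] (univ : Set α) :=
    ae_eq_univ.2 (ae_restrict_of_ae (hf.mono fun x hx => hx.ne'))
  rw [integral_pos_iff_support_of_nonneg_ae (ae_restrict_of_ae (hf.mono fun x hx => hx.le)) hfi,
    measure_congr hsupp, Measure.restrict_apply_univ]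
  exact pos_iff_ne_zero.2 hs

lemma integrableOn_dSet {v : ℝ → ℝ} (hv : LocallyIntegrable v) (I : DI) :
    IntegrableOn v (dSet I) :=
  (hv.integrableOn_isCompact isCompact_Icc).mono_set Ico_subset_Icc_self

lemma wMass_eq_add {v : ℝ → ℝ} (hv : LocallyIntegrable v) (I : DI) :
    wMass v I = wMass v (dLeft I) + wMass v (dRight I) := by
  rw [wMass, dSet_eq_union]
  exact setIntegral_union (disjoint_dSet_dLeft_dRight I) measurableSet_Ico
    (integrableOn_dSet hv _) (integrableOn_dSet hv _)

lemma IsWeight.wMass_pos {v : ℝ → ℝ} (hv : IsWeight v) (I : DI) : 0 < wMass v I :=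
  setIntegral_pos_of_ae_pos hv.2 (integrableOn_dSet hv.1 I) (by simp [volume_dSet, dLen_pos])

lemma avg_eq_wMass_div (v : ℝ → ℝ) (I : DI) : avg I v = wMass v I / dLen I :=
  inv_mul_eq_div _ _

def haarAlpha (v : ℝ → ℝ) (I : DI) : ℝ :=
  2 * √(wMass v (dLeft I)) * √(wMass v (dRight I)) / (√(wMass v I) * √(dLen I))

def haarBeta (v : ℝ → ℝ) (I : DI) : ℝ :=
  (wMass v (dRight I) - wMass v (dLeft I)) / wMass v I

lemma two_step_haar_identity {a b L : ℝ} (ha : 0 < a) (hb : 0 < b) (p q : ℝ) :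
    (√L)⁻¹ * (q - p) =
      2 * √a * √b / (√(a + b) * √L) * ((√(a + b))⁻¹ * (√(a / b) * q - √(b / a) * p)) +
        (b - a) / (a + b) * (p + q) / √L := by
  have hab : 0 < a + b := by positivity
  rw [Real.sqrt_div ha.le, Real.sqrt_div hb.le]
  field_simp
  rw [Real.sq_sqrt ha.le, Real.sq_sqrt hb.le, Real.sq_sqrt hab.le]
  ring

lemma haar_eq_add {v : ℝ → ℝ} (hv : IsWeight v) (I : DI) (x : ℝ) :
    haar I x = haarAlpha v I * whaar v I x +
      haarBeta v I * (dSet I).indicator (fun _ => (1:ℝ)) x / √(dLen I) := by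
  rw [haar, whaar, haarAlpha, haarBeta, indicator_dSet_eq_add I x, wMass_eq_add hv.1 I]
  exact two_step_haar_identity (hv.wMass_pos _) (hv.wMass_pos _) _ _

lemma two_mul_sqrt_mul_sqrt_le_add {a b : ℝ} (ha : 0 ≤ a) (hb : 0 ≤ b) :
    2 * √a * √b ≤ a + b := by
  simpa [Real.sq_sqrt ha, Real.sq_sqrt hb] using two_mul_le_add_sq (√a) (√b)

lemma abs_haarAlpha_le {v : ℝ → ℝ} (hv : IsWeight v) (I : DI) :
    |haarAlpha v I| ≤ √(avg I v) := by
  have hmass := hv.wMass_pos I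
  have hamgm : 2 * √(wMass v (dLeft I)) * √(wMass v (dRight I)) ≤ √(wMass v I) * √(wMass v I) := by
    rw [Real.mul_self_sqrt hmass.le, wMass_eq_add hv.1 I]
    exact two_mul_sqrt_mul_sqrt_le_add (hv.wMass_pos _).le (hv.wMass_pos _).le
  rw [abs_of_nonneg (by unfold haarAlpha; positivity), haarAlpha, avg_eq_wMass_div,
    Real.sqrt_div hmass.le, ← div_div,
    div_le_div_iff_of_pos_right (Real.sqrt_pos.2 (dLen_pos I))]
  exact div_le_of_le_mul₀ (Real.sqrt_nonneg _) (Real.sqrt_nonneg _) hamgm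

lemma deltaAvg_div_avg (v : ℝ → ℝ) (I : DI) : deltaAvg v I / avg I v = 2 * haarBeta v I := by
  have hL := (dLen_pos I).ne'
  rw [deltaAvg, avg_eq_wMass_div, avg_eq_wMass_div, avg_eq_wMass_div, dLen_dLeft, dLen_dRight,
    haarBeta]
  field_simp

lemma abs_haarBeta_le {v : ℝ → ℝ} (hv : IsWeight v) (I : DI) :
    |haarBeta v I| ≤ |deltaAvg v I| / avg I v := by
  have havg : 0 < avg I v := by
    rw [avg_eq_wMass_div]; exact div_pos (hv.wMass_pos I) (dLen_pos I)
  calc |haarBeta v I| ≤ |2 * haarBeta v I| := by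
        rw [abs_mul, abs_two]; linarith [abs_nonneg (haarBeta v I)]
    _ = |deltaAvg v I| / avg I v := by rw [← deltaAvg_div_avg, abs_div, abs_of_pos havg]

/-- For every dyadic interval `I`, `h_I = α_I h_I^v + β_I 𝟙_I/√|I|` with
`|α_I| ≤ √(m_I v)` and `|β_I| ≤ |Δ_I v| / m_I v`. -/
theorem stmt0 (v : ℝ → ℝ) (hv : IsWeight v) (I : DI) :
    ∃ α β : ℝ,
      (∀ x : ℝ, haar I x =
        α * whaar v I x + β * (dSet I).indicator (fun _ => (1:ℝ)) x / Real.sqrt (dLen I)) ∧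
      |α| ≤ Real.sqrt (avg I v) ∧ |β| ≤ |deltaAvg v I| / avg I v :=
  ⟨haarAlpha v I, haarBeta v I, haar_eq_add hv I, abs_haarAlpha_le hv I, abs_haarBeta_le hv I⟩
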